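/- Let (κ,ρ) ∈ (0,1]². Then: (1) there is a unique x ∈ (0,∞) with x · s(x) = 1; (2) this value is x = (2+κρ)/(2−κρ), and s((2+κρ)/(2−κρ)) = (2−κρ)/(2+κρ); (3) 1 ∈ D and D ⊆ {x ∈ ℝ : |x − 1| ≤ 2κρ}; (4) for every p ∈ (0,∞) there is exactly one i ∈ ℤ with s_i(p) ∈ D. -/
import Mathlib


open Real Filter Set

open Topology

noncomputable section

/-- `φ₀(κ,ρ,β)`. -/
def phi0 (κ ρ β : ℝ) : ℝ :=
  β * ((1 - κ) * β ^ (2 * ρ) + 2 * (1 + κ * ρ) * β ^ ρ + 1 + κ)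
    / ((1 - κ) * β ^ (2 * ρ) + 2 * (1 - κ * ρ) * β ^ ρ + 1 + κ)

/-- `φ₁(κ,ρ,β)`. -/
def phi1 (κ ρ β : ℝ) : ℝ :=
  β * ((1 + κ) * β ^ (2 * ρ) + 2 * (1 - κ * ρ) * β ^ ρ + 1 - κ)
    / ((1 + κ) * β ^ (2 * ρ) + 2 * (1 + κ * ρ) * β ^ ρ + 1 - κ)

def N0 (κ ρ t : ℝ) : ℝ := (1-κ)*t^2 + 2*(1+κ*ρ)*t + 1 + κ
def D0 (κ ρ t : ℝ) : ℝ := (1-κ)*t^2 + 2*(1-κ*ρ)*t + 1 + κ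
def N1 (κ ρ t : ℝ) : ℝ := (1+κ)*t^2 + 2*(1-κ*ρ)*t + 1 - κ
def D1 (κ ρ t : ℝ) : ℝ := (1+κ)*t^2 + 2*(1+κ*ρ)*t + 1 - κ

variable {κ ρ : ℝ}

lemma kr_le_one (hk0 : 0 < κ) (hk1 : κ ≤ 1) (hr0 : 0 < ρ) (hr1 : ρ ≤ 1) : κ * ρ ≤ 1 := by
  nlinarith

lemma D0_pos (hk0 : 0 < κ) (hk1 : κ ≤ 1) (hr0 : 0 < ρ) (hr1 : ρ ≤ 1) {t : ℝ} (ht : 0 < t) :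
    0 < D0 κ ρ t := by
  have := kr_le_one hk0 hk1 hr0 hr1
  unfold D0; nlinarith [sq_nonneg t]

lemma N0_pos (hk0 : 0 < κ) (hk1 : κ ≤ 1) (hr0 : 0 < ρ) (hr1 : ρ ≤ 1) {t : ℝ} (ht : 0 < t) :
    0 < N0 κ ρ t := by
  unfold N0
  nlinarith [mul_nonneg (sub_nonneg.2 hk1) (sq_nonneg t), mul_pos (mul_pos hk0 hr0) ht, ht]

lemma N1_pos (hk0 : 0 < κ) (hk1 : κ ≤ 1) (hr0 : 0 < ρ) (hr1 : ρ ≤ 1) {t : ℝ} (ht : 0 < t) :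
    0 < N1 κ ρ t := by
  have := kr_le_one hk0 hk1 hr0 hr1
  unfold N1
  nlinarith [mul_pos (show (0:ℝ) < 1 + κ by linarith) (mul_pos ht ht), sq_nonneg t,
    mul_nonneg (sub_nonneg.2 this) ht.le]

lemma D1_pos (hk0 : 0 < κ) (hk1 : κ ≤ 1) (hr0 : 0 < ρ) (hr1 : ρ ≤ 1) {t : ℝ} (ht : 0 < t) :
    0 < D1 κ ρ t := by
  have := kr_le_one hk0 hk1 hr0 hr1
  unfold D1
  nlinarith [mul_pos (show (0:ℝ) < 1 + κ by linarith) (mul_pos ht ht), sq_nonneg t,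
    mul_nonneg (mul_pos hk0 hr0).le ht.le, ht]

lemma key0 (hk0 : 0 < κ) (hk1 : κ ≤ 1) (hr0 : 0 < ρ) (hr1 : ρ ≤ 1) {u v : ℝ}
    (hu : 0 < u) (huv : u < v) :
    u * (N0 κ ρ u * D0 κ ρ v) < v * (N0 κ ρ v * D0 κ ρ u) := by
  have hkr := kr_le_one hk0 hk1 hr0 hr1
  obtain ⟨w, hw, rfl⟩ : ∃ w, 0 < w ∧ v = u + w := ⟨v - u, by linarith, by ring⟩
  have ha : (0:ℝ) ≤ 1 - κ := by linarith
  have hb : (0:ℝ) ≤ 1 - κ*ρ := by linarith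
  have hc : (0:ℝ) < 1 + κ := by linarith
  have hd : (0:ℝ) < 1 + κ*ρ := by nlinarith
  have he : (0:ℝ) ≤ 1 - κ^2 := by nlinarith
  have hf : (0:ℝ) ≤ 1 - (κ*ρ)^2 := by nlinarith
  unfold N0 D0
  nlinarith [mul_pos (mul_pos hc hc) hw,
    mul_pos (mul_pos hc hd) (mul_pos hw hw),
    mul_nonneg (mul_nonneg ha hc.le) (mul_pos hw (mul_pos hw hw)).le,
    mul_pos (mul_pos hc hd) (mul_pos hu hw),
    mul_nonneg he (mul_pos hu (mul_pos hw hw)).le,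
    mul_nonneg hf (mul_pos hu (mul_pos hw hw)).le,
    mul_nonneg (mul_nonneg ha hb) (mul_pos hu (mul_pos hw (mul_pos hw hw))).le,
    mul_nonneg he (mul_pos (mul_pos hu hu) hw).le,
    mul_nonneg hf (mul_pos (mul_pos hu hu) hw).le,
    mul_nonneg (mul_nonneg ha hb) (mul_pos (mul_pos hu hu) (mul_pos hw hw)).le,
    mul_nonneg (mul_nonneg ha ha) (mul_pos (mul_pos hu hu) (mul_pos hw (mul_pos hw hw))).le,
    mul_nonneg (mul_nonneg ha hb) (mul_pos (mul_pos hu (mul_pos hu hu)) hw).le,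
    mul_nonneg (mul_nonneg ha ha) (mul_pos (mul_pos hu (mul_pos hu hu)) (mul_pos hw hw)).le,
    mul_nonneg (mul_nonneg ha ha) (mul_pos (mul_pos (mul_pos hu hu) (mul_pos hu hu)) hw).le]

lemma key1 (hk0 : 0 < κ) (hk1 : κ ≤ 1) (hr0 : 0 < ρ) (hr1 : ρ ≤ 1) {u v : ℝ}
    (hu : 0 < u) (huv : u < v) :
    u * (N1 κ ρ u * D1 κ ρ v) < v * (N1 κ ρ v * D1 κ ρ u) := by
  have hkr := kr_le_one hk0 hk1 hr0 hr1
  obtain ⟨w, hw, rfl⟩ : ∃ w, 0 < w ∧ v = u + w := ⟨v - u, by linarith, by ring⟩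
  have ha : (0:ℝ) ≤ 1 - κ := by linarith
  have hb : (0:ℝ) ≤ 1 - κ*ρ := by linarith
  have hc : (0:ℝ) < 1 + κ := by linarith
  have hd : (0:ℝ) < 1 + κ*ρ := by nlinarith
  have he : (0:ℝ) ≤ 1 - κ^2 := by nlinarith
  have hf : (0:ℝ) ≤ 1 - (κ*ρ)^2 := by nlinarith
  unfold N1 D1
  nlinarith [mul_nonneg (mul_nonneg ha ha) hw.le,
    mul_nonneg (mul_nonneg ha hb) (mul_pos hw hw).le,
    mul_nonneg he (mul_pos hw (mul_pos hw hw)).le,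
    mul_nonneg (mul_nonneg ha hb) (mul_pos hu hw).le,
    mul_nonneg he (mul_pos hu (mul_pos hw hw)).le,
    mul_nonneg hf (mul_pos hu (mul_pos hw hw)).le,
    mul_pos (mul_pos hc hd) (mul_pos hu (mul_pos hw (mul_pos hw hw))),
    mul_nonneg he (mul_pos (mul_pos hu hu) hw).le,
    mul_nonneg hf (mul_pos (mul_pos hu hu) hw).le,
    mul_pos (mul_pos hc hd) (mul_pos (mul_pos hu hu) (mul_pos hw hw)),
    mul_pos (mul_pos hc hc) (mul_pos (mul_pos hu hu) (mul_pos hw (mul_pos hw hw))),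
    mul_pos (mul_pos hc hd) (mul_pos (mul_pos hu (mul_pos hu hu)) hw),
    mul_pos (mul_pos hc hc) (mul_pos (mul_pos hu (mul_pos hu hu)) (mul_pos hw hw)),
    mul_pos (mul_pos hc hc) (mul_pos (mul_pos (mul_pos hu hu) (mul_pos hu hu)) hw)]


lemma rpow_two_mul {β : ℝ} (hβ : 0 < β) : β ^ (2*ρ) = (β ^ ρ)^2 := by
  rw [two_mul, Real.rpow_add hβ, sq]

lemma phi0_eq {β : ℝ} (hβ : 0 < β) : phi0 κ ρ β = β * N0 κ ρ (β ^ ρ) / D0 κ ρ (β ^ ρ) := by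
  unfold phi0 N0 D0; rw [rpow_two_mul hβ]

lemma phi1_eq {β : ℝ} (hβ : 0 < β) : phi1 κ ρ β = β * N1 κ ρ (β ^ ρ) / D1 κ ρ (β ^ ρ) := by
  unfold phi1 N1 D1; rw [rpow_two_mul hβ]

section basic
variable (hk0 : 0 < κ) (hk1 : κ ≤ 1) (hr0 : 0 < ρ) (hr1 : ρ ≤ 1)
include hk0 hk1 hr0 hr1

lemma phi0_pos {β : ℝ} (hβ : 0 < β) : 0 < phi0 κ ρ β := by
  have hu := Real.rpow_pos_of_pos hβ ρ
  rw [phi0_eq hβ]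
  exact div_pos (mul_pos hβ (N0_pos hk0 hk1 hr0 hr1 hu)) (D0_pos hk0 hk1 hr0 hr1 hu)

lemma phi1_pos {β : ℝ} (hβ : 0 < β) : 0 < phi1 κ ρ β := by
  have hu := Real.rpow_pos_of_pos hβ ρ
  rw [phi1_eq hβ]
  exact div_pos (mul_pos hβ (N1_pos hk0 hk1 hr0 hr1 hu)) (D1_pos hk0 hk1 hr0 hr1 hu)

lemma phi0_gt {β : ℝ} (hβ : 0 < β) : β < phi0 κ ρ β := by
  have hu := Real.rpow_pos_of_pos hβ ρ
  rw [phi0_eq hβ, lt_div_iff₀ (D0_pos hk0 hk1 hr0 hr1 hu)]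
  have : D0 κ ρ (β ^ ρ) < N0 κ ρ (β ^ ρ) := by
    unfold N0 D0; nlinarith [mul_pos (mul_pos hk0 hr0) hu]
  nlinarith [N0_pos hk0 hk1 hr0 hr1 hu]

lemma phi1_lt {β : ℝ} (hβ : 0 < β) : phi1 κ ρ β < β := by
  have hu := Real.rpow_pos_of_pos hβ ρ
  rw [phi1_eq hβ, div_lt_iff₀ (D1_pos hk0 hk1 hr0 hr1 hu)]
  have : N1 κ ρ (β ^ ρ) < D1 κ ρ (β ^ ρ) := by
    unfold N1 D1; nlinarith [mul_pos (mul_pos hk0 hr0) hu]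
  nlinarith [N1_pos hk0 hk1 hr0 hr1 hu]

lemma phi0_mono {a b : ℝ} (ha : 0 < a) (hab : a < b) : phi0 κ ρ a < phi0 κ ρ b := by
  have hb : 0 < b := ha.trans hab
  set u := a ^ ρ with hudef
  set v := b ^ ρ with hvdef
  have hu : 0 < u := Real.rpow_pos_of_pos ha ρ
  have hv : 0 < v := Real.rpow_pos_of_pos hb ρ
  have huv : u < v := Real.rpow_lt_rpow ha.le hab hr0
  have hcross : a * v ≤ b * u := by
    have h1 : (b/a) ^ ρ ≤ b/a := by
      calc (b/a)^ρ ≤ (b/a)^(1:ℝ) :=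
        Real.rpow_le_rpow_of_exponent_le (by rw [le_div_iff₀ ha]; linarith) hr1
      _ = b/a := Real.rpow_one _
    rw [Real.div_rpow hb.le ha.le] at h1
    have := (div_le_div_iff₀ hu ha).mp h1
    nlinarith
  have hkey := key0 hk0 hk1 hr0 hr1 hu huv
  rw [phi0_eq ha, phi0_eq hb, div_lt_div_iff₀ (D0_pos hk0 hk1 hr0 hr1 hu) (D0_pos hk0 hk1 hr0 hr1 hv)]
  have hN : 0 < N0 κ ρ v := N0_pos hk0 hk1 hr0 hr1 hv
  have hD : 0 < D0 κ ρ u := D0_pos hk0 hk1 hr0 hr1 hu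
  -- a * N0 u * D0 v < b * N0 v * D0 u
  have h2 : a * u * (N0 κ ρ u * D0 κ ρ v) < a * v * (N0 κ ρ v * D0 κ ρ u) := by
    have := mul_lt_mul_of_pos_left hkey ha
    nlinarith
  have h3 : a * v * (N0 κ ρ v * D0 κ ρ u) ≤ b * u * (N0 κ ρ v * D0 κ ρ u) :=
    mul_le_mul_of_nonneg_right hcross (mul_pos hN hD).le
  have h4 : a * u * (N0 κ ρ u * D0 κ ρ v) < b * u * (N0 κ ρ v * D0 κ ρ u) := lt_of_lt_of_le h2 h3
  nlinarith [h4, hu]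

lemma phi1_mono {a b : ℝ} (ha : 0 < a) (hab : a < b) : phi1 κ ρ a < phi1 κ ρ b := by
  have hb : 0 < b := ha.trans hab
  set u := a ^ ρ
  set v := b ^ ρ
  have hu : 0 < u := Real.rpow_pos_of_pos ha ρ
  have hv : 0 < v := Real.rpow_pos_of_pos hb ρ
  have huv : u < v := Real.rpow_lt_rpow ha.le hab hr0
  have hcross : a * v ≤ b * u := by
    have h1 : (b/a) ^ ρ ≤ b/a := by
      calc (b/a)^ρ ≤ (b/a)^(1:ℝ) :=
        Real.rpow_le_rpow_of_exponent_le (by rw [le_div_iff₀ ha]; linarith) hr1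
      _ = b/a := Real.rpow_one _
    rw [Real.div_rpow hb.le ha.le] at h1
    have := (div_le_div_iff₀ hu ha).mp h1
    nlinarith
  have hkey := key1 hk0 hk1 hr0 hr1 hu huv
  rw [phi1_eq ha, phi1_eq hb, div_lt_div_iff₀ (D1_pos hk0 hk1 hr0 hr1 hu) (D1_pos hk0 hk1 hr0 hr1 hv)]
  have hN : 0 < N1 κ ρ v := N1_pos hk0 hk1 hr0 hr1 hv
  have hD : 0 < D1 κ ρ u := D1_pos hk0 hk1 hr0 hr1 hu
  have h2 : a * u * (N1 κ ρ u * D1 κ ρ v) < a * v * (N1 κ ρ v * D1 κ ρ u) := by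
    have := mul_lt_mul_of_pos_left hkey ha
    nlinarith
  have h3 : a * v * (N1 κ ρ v * D1 κ ρ u) ≤ b * u * (N1 κ ρ v * D1 κ ρ u) :=
    mul_le_mul_of_nonneg_right hcross (mul_pos hN hD).le
  have h4 : a * u * (N1 κ ρ u * D1 κ ρ v) < b * u * (N1 κ ρ v * D1 κ ρ u) := lt_of_lt_of_le h2 h3
  nlinarith [h4, hu]

lemma phi0_one : phi0 κ ρ 1 = (2 + κ*ρ)/(2 - κ*ρ) := by
  have hkr := kr_le_one hk0 hk1 hr0 hr1
  unfold phi0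
  rw [Real.one_rpow, Real.one_rpow]
  rw [div_eq_div_iff (by nlinarith) (by nlinarith)]
  ring

lemma phi1_one : phi1 κ ρ 1 = (2 - κ*ρ)/(2 + κ*ρ) := by
  have hkr := kr_le_one hk0 hk1 hr0 hr1
  unfold phi1
  rw [Real.one_rpow, Real.one_rpow]
  rw [div_eq_div_iff (by nlinarith) (by nlinarith)]
  ring

end basic


section more
variable (hk0 : 0 < κ) (hk1 : κ ≤ 1) (hr0 : 0 < ρ) (hr1 : ρ ≤ 1)
include hk0 hk1 hr0 hr1

lemma rpowc (c : ℝ) : ContinuousOn (fun β : ℝ => β ^ c) (Ioi 0) := fun x hx =>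
  (Real.continuousAt_rpow_const x c (Or.inl (ne_of_gt hx))).continuousWithinAt

lemma phi0_contOn : ContinuousOn (phi0 κ ρ) (Ioi 0) := by
  apply ContinuousOn.div
  · exact continuousOn_id.mul ((((continuousOn_const.mul (rpowc hk0 hk1 hr0 hr1 (2*ρ))).add
      (continuousOn_const.mul (rpowc hk0 hk1 hr0 hr1 ρ))).add continuousOn_const).add
      continuousOn_const)
  · exact (((continuousOn_const.mul (rpowc hk0 hk1 hr0 hr1 (2*ρ))).add
      (continuousOn_const.mul (rpowc hk0 hk1 hr0 hr1 ρ))).add continuousOn_const).add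
      continuousOn_const
  · intro x hx
    have hx : (0:ℝ) < x := hx
    have : (1 - κ) * x ^ (2*ρ) + 2 * (1 - κ * ρ) * x ^ ρ + 1 + κ = D0 κ ρ (x ^ ρ) := by
      unfold D0; rw [rpow_two_mul hx]
    rw [this]
    exact ne_of_gt (D0_pos hk0 hk1 hr0 hr1 (Real.rpow_pos_of_pos hx ρ))

lemma phi1_contOn : ContinuousOn (phi1 κ ρ) (Ioi 0) := by
  apply ContinuousOn.div
  · exact continuousOn_id.mul ((((continuousOn_const.mul (rpowc hk0 hk1 hr0 hr1 (2*ρ))).add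
      (continuousOn_const.mul (rpowc hk0 hk1 hr0 hr1 ρ))).add continuousOn_const).sub
      continuousOn_const)
  · exact (((continuousOn_const.mul (rpowc hk0 hk1 hr0 hr1 (2*ρ))).add
      (continuousOn_const.mul (rpowc hk0 hk1 hr0 hr1 ρ))).add continuousOn_const).sub
      continuousOn_const
  · intro x hx
    have hx : (0:ℝ) < x := hx
    have : (1 + κ) * x ^ (2*ρ) + 2 * (1 + κ * ρ) * x ^ ρ + 1 - κ = D1 κ ρ (x ^ ρ) := by
      unfold D1; rw [rpow_two_mul hx]
    rw [this]
    exact ne_of_gt (D1_pos hk0 hk1 hr0 hr1 (Real.rpow_pos_of_pos hx ρ))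

-- surjectivity of phi0
lemma phi0_surj {y : ℝ} (hy : 0 < y) : ∃ β, 0 < β ∧ phi0 κ ρ β = y := by
  set a := min (y/5) 1 with hadef
  have ha : 0 < a := lt_min (by linarith) one_pos
  have ha1 : a ≤ 1 := min_le_right _ _
  have hay : a ≤ y := le_trans (min_le_left _ _) (by linarith)
  have hbound : phi0 κ ρ a ≤ 5 * a := by
    have hu : 0 < a ^ ρ := Real.rpow_pos_of_pos ha ρ
    have hu1 : a ^ ρ ≤ 1 := Real.rpow_le_one ha.le ha1 hr0.le
    have hD : 0 < D0 κ ρ (a ^ ρ) := D0_pos hk0 hk1 hr0 hr1 hu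
    have hkr := kr_le_one hk0 hk1 hr0 hr1
    rw [phi0_eq ha, div_le_iff₀ hD]
    have h1 : N0 κ ρ (a ^ ρ) ≤ D0 κ ρ (a ^ ρ) + 4 := by
      unfold N0 D0; nlinarith [mul_pos hk0 hr0]
    have h2 : 1 ≤ D0 κ ρ (a ^ ρ) := by
      unfold D0; nlinarith [sq_nonneg (a ^ ρ), mul_nonneg (sub_nonneg.2 hkr) hu.le]
    nlinarith
  have h1 : phi0 κ ρ a ≤ y := by
    calc phi0 κ ρ a ≤ 5 * a := hbound
    _ ≤ 5 * (y/5) := by nlinarith [min_le_left (y/5) (1:ℝ)]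
    _ = y := by ring
  have h2 : y ≤ phi0 κ ρ y := (phi0_gt hk0 hk1 hr0 hr1 hy).le
  have hcont : ContinuousOn (phi0 κ ρ) (Icc a y) := (phi0_contOn hk0 hk1 hr0 hr1).mono
    (fun x hx => lt_of_lt_of_le ha hx.1)
  have := intermediate_value_Icc hay hcont
  obtain ⟨β, hβmem, hβ⟩ := this ⟨h1, h2⟩
  exact ⟨β, lt_of_lt_of_le ha hβmem.1, hβ⟩

-- surjectivity of phi1
lemma phi1_surj {y : ℝ} (hy : 0 < y) : ∃ β, 0 < β ∧ phi1 κ ρ β = y := by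
  set a := min y 1 with hadef
  have ha : 0 < a := lt_min hy one_pos
  set b := max (8*y) 1 with hbdef
  have hb1 : 1 ≤ b := le_max_right _ _
  have hab : a ≤ b := le_trans (min_le_right _ _) hb1
  have h1 : phi1 κ ρ a ≤ y :=
    le_trans (phi1_lt hk0 hk1 hr0 hr1 ha).le (min_le_left _ _)
  have h2 : y ≤ phi1 κ ρ b := by
    have hbpos : 0 < b := lt_of_lt_of_le one_pos hb1
    have hu1 : 1 ≤ b ^ ρ := Real.one_le_rpow hb1 hr0.le
    have hu : 0 < b ^ ρ := lt_of_lt_of_le one_pos hu1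
    have hD : 0 < D1 κ ρ (b ^ ρ) := D1_pos hk0 hk1 hr0 hr1 hu
    have hkr := kr_le_one hk0 hk1 hr0 hr1
    have hlow : b / 8 ≤ phi1 κ ρ b := by
      rw [phi1_eq hbpos, le_div_iff₀ hD]
      have hN : (b ^ ρ)^2 ≤ N1 κ ρ (b ^ ρ) := by
        unfold N1; nlinarith [mul_nonneg (sub_nonneg.2 hkr) hu.le, sq_nonneg (b^ρ)]
      have hK : D1 κ ρ (b ^ ρ) ≤ 8 * (b ^ ρ)^2 := by
        unfold D1; nlinarith [mul_pos hk0 hr0, sq_nonneg (b^ρ - 1)]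
      nlinarith [sq_nonneg (b^ρ), mul_pos hbpos (mul_pos hu hu)]
    calc y = 8 * y / 8 := by ring
    _ ≤ b / 8 := by have := le_max_left (8*y) 1; linarith
    _ ≤ phi1 κ ρ b := hlow
  have hcont : ContinuousOn (phi1 κ ρ) (Icc a b) := (phi1_contOn hk0 hk1 hr0 hr1).mono
    (fun x hx => lt_of_lt_of_le ha hx.1)
  obtain ⟨β, hβmem, hβ⟩ := intermediate_value_Icc hab hcont ⟨h1, h2⟩
  exact ⟨β, lt_of_lt_of_le ha hβmem.1, hβ⟩

end more


theorem stmt16 (κ ρ : ℝ) (hκ : κ ∈ Set.Ioc (0:ℝ) 1) (hρ : ρ ∈ Set.Ioc (0:ℝ) 1)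
    (s : ℝ → ℝ) (hs : ∀ β : ℝ, 0 < β → s (phi0 κ ρ β) = phi1 κ ρ β)
    (siter : ℤ → ℝ → ℝ)
    (hs0 : ∀ x : ℝ, 0 < x → siter 0 x = x)
    (hspos : ∀ (i : ℤ) (x : ℝ), 0 < x → 0 < siter i x)
    (hsrec : ∀ (i : ℤ) (x : ℝ), 0 < x → siter (i + 1) x = s (siter i x)) :
    (∃! y : ℝ, 0 < y ∧ y * s y = 1) ∧
    (2 + κ * ρ) / (2 - κ * ρ) * s ((2 + κ * ρ) / (2 - κ * ρ)) = 1 ∧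
    s ((2 + κ * ρ) / (2 - κ * ρ)) = (2 - κ * ρ) / (2 + κ * ρ) ∧
    (1 : ℝ) ∈ Set.Ioc ((2 - κ * ρ) / (2 + κ * ρ)) ((2 + κ * ρ) / (2 - κ * ρ)) ∧
    Set.Ioc ((2 - κ * ρ) / (2 + κ * ρ)) ((2 + κ * ρ) / (2 - κ * ρ))
      ⊆ { y : ℝ | |y - 1| ≤ 2 * κ * ρ } ∧
    ∀ p : ℝ, 0 < p →
      ∃! i : ℤ, siter i p ∈ Set.Ioc ((2 - κ * ρ) / (2 + κ * ρ)) ((2 + κ * ρ) / (2 - κ * ρ)) := by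
  obtain ⟨hk0, hk1⟩ := hκ
  obtain ⟨hr0, hr1⟩ := hρ
  have hkr : κ * ρ ≤ 1 := kr_le_one hk0 hk1 hr0 hr1
  have hkrpos : 0 < κ * ρ := mul_pos hk0 hr0
  set A : ℝ := (2 - κ * ρ) / (2 + κ * ρ) with hAdef
  set B : ℝ := (2 + κ * ρ) / (2 - κ * ρ) with hBdef
  have hden1 : (0:ℝ) < 2 - κ * ρ := by linarith
  have hden2 : (0:ℝ) < 2 + κ * ρ := by linarith
  have hApos : 0 < A := div_pos (by linarith) hden2
  have hA1 : A < 1 := by rw [hAdef, div_lt_one hden2]; linarith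
  have hB1 : 1 ≤ B := by rw [hBdef, le_div_iff₀ hden1]; linarith
  have hBpos : 0 < B := lt_of_lt_of_le one_pos hB1
  have hAB : A * B = 1 := by
    rw [hAdef, hBdef, div_mul_div_comm, div_eq_one_iff_eq (by positivity)]; ring
  -- s basic facts
  have s_val : ∀ β : ℝ, 0 < β → s (phi0 κ ρ β) = phi1 κ ρ β := hs
  have s_lt : ∀ y : ℝ, 0 < y → s y < y := by
    intro y hy
    obtain ⟨β, hβ, rfl⟩ := phi0_surj hk0 hk1 hr0 hr1 hy
    rw [s_val β hβ]
    exact lt_trans (phi1_lt hk0 hk1 hr0 hr1 hβ) (phi0_gt hk0 hk1 hr0 hr1 hβ)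
  have s_pos : ∀ y : ℝ, 0 < y → 0 < s y := by
    intro y hy
    obtain ⟨β, hβ, rfl⟩ := phi0_surj hk0 hk1 hr0 hr1 hy
    rw [s_val β hβ]
    exact phi1_pos hk0 hk1 hr0 hr1 hβ
  have phi0_lt_iff : ∀ a b : ℝ, 0 < a → 0 < b → (phi0 κ ρ a < phi0 κ ρ b ↔ a < b) := by
    intro a b ha hb
    constructor
    · intro h
      by_contra hle
      push_neg at hle
      rcases eq_or_lt_of_le hle with rfl | hlt
      · exact lt_irrefl _ h
      · exact absurd (phi0_mono hk0 hk1 hr0 hr1 hb hlt) (not_lt.2 h.le)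
    · exact phi0_mono hk0 hk1 hr0 hr1 ha
  have phi1_lt_iff : ∀ a b : ℝ, 0 < a → 0 < b → (phi1 κ ρ a < phi1 κ ρ b ↔ a < b) := by
    intro a b ha hb
    constructor
    · intro h
      by_contra hle
      push_neg at hle
      rcases eq_or_lt_of_le hle with rfl | hlt
      · exact lt_irrefl _ h
      · exact absurd (phi1_mono hk0 hk1 hr0 hr1 hb hlt) (not_lt.2 h.le)
    · exact phi1_mono hk0 hk1 hr0 hr1 ha
  have s_mono : ∀ x y : ℝ, 0 < x → x < y → s x < s y := by
    intro x y hx hxy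
    obtain ⟨a, ha, rfl⟩ := phi0_surj hk0 hk1 hr0 hr1 hx
    obtain ⟨b, hb, rfl⟩ := phi0_surj hk0 hk1 hr0 hr1 (hx.trans hxy)
    rw [s_val a ha, s_val b hb]
    exact (phi1_lt_iff a b ha hb).2 ((phi0_lt_iff a b ha hb).1 hxy)
  have s_mono_le : ∀ x y : ℝ, 0 < x → x ≤ y → s x ≤ s y := by
    intro x y hx hxy
    rcases eq_or_lt_of_le hxy with rfl | h
    · exact le_refl _
    · exact (s_mono x y hx h).le
  -- value at B
  have hsB : s B = A := by
    have := s_val 1 one_pos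
    rwa [phi0_one hk0 hk1 hr0 hr1, phi1_one hk0 hk1 hr0 hr1] at this
  have hBsB : B * s B = 1 := by rw [hsB]; rw [mul_comm]; exact hAB
  refine ⟨?_, hBsB, hsB, ⟨hA1, hB1⟩, ?_, ?_⟩
  · -- unique fixed point of x * s x = 1
    refine ⟨B, ⟨hBpos, hBsB⟩, ?_⟩
    rintro y ⟨hy, hy1⟩
    obtain ⟨β, hβ, rfl⟩ := phi0_surj hk0 hk1 hr0 hr1 hy
    rw [s_val β hβ] at hy1
    have h1 : phi0 κ ρ 1 * phi1 κ ρ 1 = 1 := by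
      rw [phi0_one hk0 hk1 hr0 hr1, phi1_one hk0 hk1 hr0 hr1]; field_simp
    have hβ1 : β = 1 := by
      by_contra hne
      rcases lt_or_gt_of_ne hne with h | h
      · have := mul_lt_mul'' (phi0_mono hk0 hk1 hr0 hr1 hβ h) (phi1_mono hk0 hk1 hr0 hr1 hβ h)
          (phi0_pos hk0 hk1 hr0 hr1 hβ).le (phi1_pos hk0 hk1 hr0 hr1 hβ).le
        rw [hy1, h1] at this; exact lt_irrefl _ this
      · have := mul_lt_mul'' (phi0_mono hk0 hk1 hr0 hr1 one_pos h) (phi1_mono hk0 hk1 hr0 hr1 one_pos h)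
          (phi0_pos hk0 hk1 hr0 hr1 one_pos).le (phi1_pos hk0 hk1 hr0 hr1 one_pos).le
        rw [hy1, h1] at this; exact lt_irrefl _ this
    rw [hβ1, phi0_one hk0 hk1 hr0 hr1]
  · -- D ⊆ |y-1| ≤ 2κρ
    rintro y ⟨h1, h2⟩
    rw [Set.mem_setOf_eq, abs_le]
    constructor
    · have : 1 - 2*(κ*ρ) ≤ A := by
        rw [hAdef, le_div_iff₀ hden2]; nlinarith
      nlinarith
    · have : B ≤ 1 + 2*(κ*ρ) := by
        rw [hBdef, div_le_iff₀ hden1]; nlinarith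
      nlinarith
  · -- orbit statement
    intro p hp
    set o : ℤ → ℝ := fun i => siter i p with hodef
    have ho_pos : ∀ i, 0 < o i := fun i => hspos i p hp
    have hrec : ∀ i, o (i+1) = s (o i) := fun i => hsrec i p hp
    have hstep : ∀ i, o (i+1) < o i := fun i => by
      rw [hrec i]; exact s_lt (o i) (ho_pos i)
    have hanti : StrictAnti o := strictAnti_int_of_succ_lt hstep
    set E : Set ℤ := {i | o i ≤ B} with hEdef
    have hrange_ne : (Set.range o).Nonempty := ⟨o 0, Set.mem_range_self 0⟩
    -- E nonempty
    have hEne : ∃ i, o i ≤ B := by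
      by_contra hno
      push_neg at hno
      have hbdd : BddBelow (Set.range o) := ⟨B, by rintro x ⟨i, rfl⟩; exact (hno i).le⟩
      set L : ℝ := sInf (Set.range o) with hLdef
      have hBL : B ≤ L := le_csInf hrange_ne (by rintro x ⟨i, rfl⟩; exact (hno i).le)
      have hLpos : 0 < L := lt_of_lt_of_le hBpos hBL
      obtain ⟨γ, hγ, hγL⟩ := phi0_surj hk0 hk1 hr0 hr1 hLpos
      have hφ1γ : phi1 κ ρ γ < L := by
        rw [← hγL]
        exact lt_trans (phi1_lt hk0 hk1 hr0 hr1 hγ) (phi0_gt hk0 hk1 hr0 hr1 hγ)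
      have hca : ContinuousAt (phi1 κ ρ) γ :=
        (phi1_contOn hk0 hk1 hr0 hr1).continuousAt (Ioi_mem_nhds hγ)
      have hev : ∀ᶠ β in 𝓝 γ, phi1 κ ρ β < L :=
        hca.eventually_lt continuousAt_const hφ1γ
      have hev' : ∀ᶠ β in 𝓝[>] γ, phi1 κ ρ β < L := hev.filter_mono nhdsWithin_le_nhds
      obtain ⟨β, hβ1, hβγ⟩ := (hev'.and self_mem_nhdsWithin).exists
      have hβpos : 0 < β := lt_trans hγ hβγ
      have hφ0β : L < phi0 κ ρ β := by
        rw [← hγL]; exact phi0_mono hk0 hk1 hr0 hr1 hγ hβγ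
      obtain ⟨x, ⟨i, rfl⟩, hx⟩ := exists_lt_of_csInf_lt hrange_ne hφ0β
      obtain ⟨β', hβ'pos, hβ'⟩ := phi0_surj hk0 hk1 hr0 hr1 (ho_pos i)
      have hββ' : β' < β := by
        rw [← phi0_lt_iff β' β hβ'pos hβpos, hβ']
        exact hx
      have : o (i+1) < L := by
        rw [hrec i, ← hβ', s_val β' hβ'pos]
        exact lt_trans (phi1_mono hk0 hk1 hr0 hr1 hβ'pos hββ') hβ1
      exact absurd (csInf_le hbdd (Set.mem_range_self (i+1))) (not_le.2 this)
    -- E bounded below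
    have hEbdd : ∃ b : ℤ, ∀ z : ℤ, o z ≤ B → b ≤ z := by
      by_contra hno
      push_neg at hno
      have hall : ∀ i, o i ≤ B := by
        intro i
        obtain ⟨z, hz, hzi⟩ := hno i
        exact le_trans (hanti hzi).le hz
      have hbdd : BddAbove (Set.range o) := ⟨B, by rintro x ⟨i, rfl⟩; exact hall i⟩
      set U : ℝ := sSup (Set.range o) with hUdef
      have hU0 : 0 < U := lt_of_lt_of_le (ho_pos 0) (le_csSup hbdd (Set.mem_range_self 0))
      obtain ⟨γ, hγ, hγU⟩ := phi1_surj hk0 hk1 hr0 hr1 hU0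
      have hφ0γ : U < phi0 κ ρ γ := by
        rw [← hγU]
        exact lt_trans (phi1_lt hk0 hk1 hr0 hr1 hγ) (phi0_gt hk0 hk1 hr0 hr1 hγ)
      have hca : ContinuousAt (phi0 κ ρ) γ :=
        (phi0_contOn hk0 hk1 hr0 hr1).continuousAt (Ioi_mem_nhds hγ)
      have hev : ∀ᶠ β in 𝓝 γ, U < phi0 κ ρ β :=
        continuousAt_const.eventually_lt hca hφ0γ
      have hev2 : ∀ᶠ β in 𝓝 γ, 0 < β := eventually_gt_nhds hγ
      have hev' : ∀ᶠ β in 𝓝[<] γ, U < phi0 κ ρ β ∧ 0 < β :=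
        (hev.and hev2).filter_mono nhdsWithin_le_nhds
      obtain ⟨β, ⟨hβ1, hβpos⟩, hβγ⟩ := (hev'.and self_mem_nhdsWithin).exists
      have hφ1β : phi1 κ ρ β < U := by
        rw [← hγU]; exact phi1_mono hk0 hk1 hr0 hr1 hβpos hβγ
      obtain ⟨x, ⟨i, rfl⟩, hx⟩ := exists_lt_of_lt_csSup hrange_ne hφ1β
      have hoi : o i = s (o (i-1)) := by
        have := hrec (i-1)
        rwa [sub_add_cancel] at this
      obtain ⟨β', hβ'pos, hβ'⟩ := phi0_surj hk0 hk1 hr0 hr1 (ho_pos (i-1))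
      have hoi2 : o i = phi1 κ ρ β' := by rw [hoi, ← hβ', s_val β' hβ'pos]
      have hββ' : β < β' := by
        rw [← phi1_lt_iff β β' hβpos hβ'pos, ← hoi2]
        exact hx
      have : U < o (i-1) := by
        rw [← hβ']
        exact lt_trans hβ1 (phi0_mono hk0 hk1 hr0 hr1 hβpos hββ')
      exact absurd (le_csSup hbdd (Set.mem_range_self (i-1))) (not_le.2 this)
    obtain ⟨b, hb⟩ := hEbdd
    obtain ⟨i₀, hi₀, hleast⟩ := Int.exists_least_of_bdd (P := fun i => o i ≤ B) ⟨b, hb⟩ hEne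
    have hprev : B < o (i₀ - 1) := by
      by_contra hle
      push_neg at hle
      have := hleast _ hle
      omega
    have hgtA : A < o i₀ := by
      have : o i₀ = s (o (i₀ - 1)) := by
        have := hrec (i₀ - 1); rwa [sub_add_cancel] at this
      rw [this, ← hsB]
      exact s_mono B (o (i₀-1)) hBpos hprev
    refine ⟨i₀, ⟨hgtA, hi₀⟩, ?_⟩
    rintro j ⟨hjA, hjB⟩
    have hij : i₀ ≤ j := hleast j hjB
    rcases eq_or_lt_of_le hij with rfl | hlt
    · rfl
    · exfalso
      have h1 : o j ≤ o (i₀ + 1) := hanti.antitone (by omega)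
      have h2 : o (i₀ + 1) ≤ A := by
        rw [hrec i₀, ← hsB]
        exact s_mono_le (o i₀) B (ho_pos i₀) hi₀
      linarith
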